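/- arXiv:2310.01238 — 4 statements merged into one kernel-verified Lean document; each statement's English description precedes it below -/
import Mathlib

section
/- Let (ε_k)_{k≥1} be i.i.d. real random variables with mean zero and variance σ² ∈ (0, ∞). Then h_n(ε_1, …, ε_n) → 1 almost surely as n → ∞ (evaluated on the almost-sure event that (ε_1,…,ε_n) ≠ 0 for n large). -/
open MeasureTheory ProbabilityTheory Filter

/-- The Hoyer sparsity index of the vector `(x 0, …, x (n-1))`:
`h_n(x) = (√n - |Σ_{k<n} x k| / ‖x‖₂) / (√n - 1)`. -/
noncomputable def hoyerSeq (n : ℕ) (x : ℕ → ℝ) : ℝ :=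
  (Real.sqrt n -
      |∑ k ∈ Finset.range n, x k| / Real.sqrt (∑ k ∈ Finset.range n, (x k) ^ 2)) /
    (Real.sqrt n - 1)

/-!
Dividing numerator and denominator of `h_n(x)` by `√n` writes it as `(1 - r_n) / (1 - 1/√n)`,
where `r_n = |Σ x_k| / (√n ‖x‖₂)` is the absolute empirical mean over the empirical root mean
square. By the strong law of large numbers for `(ε_k)` and `(ε_k²)`, almost surely the empirical
mean tends to `0` and the empirical mean square to `σ² > 0`, so `r_n → 0` and `h_n → 1`.
-/

open Finset Real Topology

lemma hoyerSeq_eq {n : ℕ} (hn : n ≠ 0) (x : ℕ → ℝ) :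
    hoyerSeq n x = (1 - |∑ k ∈ range n, x k| / (√n * √(∑ k ∈ range n, x k ^ 2))) /
      (1 - (√n)⁻¹) := by
  have hsqrt : √(n : ℝ) ≠ 0 := by positivity
  rw [hoyerSeq, mul_comm, ← div_div]
  field_simp

lemma abs_sum_div_sqrt_mul_sqrt_sum_sq (n : ℕ) (x : ℕ → ℝ) :
    |∑ k ∈ range n, x k| / (√n * √(∑ k ∈ range n, x k ^ 2)) =
      |(∑ k ∈ range n, x k) / n| / √((∑ k ∈ range n, x k ^ 2) / n) := by
  rw [abs_div, Nat.abs_cast, sqrt_div' _ (Nat.cast_nonneg n)]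
  nth_rw 2 [← mul_self_sqrt (Nat.cast_nonneg (α := ℝ) n)]
  rcases eq_or_ne (√(n : ℝ)) 0 with hs | hs
  · simp [hs]
  · rw [div_div_div_eq, mul_right_comm (√(n : ℝ)), mul_div_mul_right _ _ hs]

lemma tendsto_hoyerSeq_one_of_tendsto_zero {x : ℕ → ℝ}
    (h : Tendsto (fun n : ℕ => |∑ k ∈ range n, x k| / (√n * √(∑ k ∈ range n, x k ^ 2)))
      atTop (𝓝 0)) :
    Tendsto (fun n => hoyerSeq n x) atTop (𝓝 1) := by
  have hinv : Tendsto (fun n : ℕ => (√n)⁻¹) atTop (𝓝 0) :=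
    tendsto_inv_atTop_zero.comp (tendsto_sqrt_atTop.comp tendsto_natCast_atTop_atTop)
  have hlim := (tendsto_const_nhds (x := (1 : ℝ))).sub h |>.div
    ((tendsto_const_nhds (x := (1 : ℝ))).sub hinv) (by norm_num)
  rw [sub_zero, div_one] at hlim
  exact hlim.congr' <| (eventually_ne_atTop 0).mono fun n hn => (hoyerSeq_eq hn x).symm

lemma tendsto_abs_sum_div_sqrt_mul_sqrt_sum_sq_zero {x : ℕ → ℝ} {s : ℝ} (hs : 0 < s)
    (hmean : Tendsto (fun n : ℕ => (∑ k ∈ range n, x k) / n) atTop (𝓝 0))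
    (hmeanSq : Tendsto (fun n : ℕ => (∑ k ∈ range n, x k ^ 2) / n) atTop (𝓝 s)) :
    Tendsto (fun n : ℕ => |∑ k ∈ range n, x k| / (√n * √(∑ k ∈ range n, x k ^ 2)))
      atTop (𝓝 0) := by
  have hlim := hmean.abs.div hmeanSq.sqrt (sqrt_pos.2 hs).ne'
  rw [abs_zero, zero_div] at hlim
  simp_rw [abs_sum_div_sqrt_mul_sqrt_sum_sq]
  exact hlim

/-- Rate-free form of Lemma 2: for i.i.d. mean-zero noise with variance `σ² ∈ (0,∞)`,
the Hoyer index `h_n(ε₁,…,ε_n)` converges to `1` almost surely, i.e. a white-noise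
matrix is asymptotically as sparse as a blank matrix. -/
theorem hoyer_whiteNoise_tendsto_one_as
    {Ω : Type*} [MeasureSpace Ω] [IsProbabilityMeasure (ℙ : Measure Ω)]
    (ε : ℕ → Ω → ℝ) (σ2 : ℝ) (hσ2 : 0 < σ2)
    (hmeas : ∀ k, Measurable (ε k))
    (hindep : iIndepFun ε ℙ)
    (hident : ∀ k, Measure.map (ε k) ℙ = Measure.map (ε 0) ℙ)
    (hint : ∀ k, Integrable (ε k) ℙ)
    (hmean : ∀ k, ∫ ω, ε k ω = 0)
    (hsqint : ∀ k, Integrable (fun ω => (ε k ω) ^ 2) ℙ)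
    (hvar : ∀ k, ∫ ω, (ε k ω) ^ 2 = σ2) :
    ∀ᵐ ω ∂(ℙ : Measure Ω),
      Tendsto (fun n : ℕ => hoyerSeq n (fun k => ε k ω)) atTop (nhds 1) := by
  have hidentDistrib : ∀ k, IdentDistrib (ε k) (ε 0) ℙ ℙ := fun k =>
    ⟨(hmeas k).aemeasurable, (hmeas 0).aemeasurable, hident k⟩
  have hpairwise : Pairwise (Function.onFun (IndepFun · · (ℙ : Measure Ω)) ε) := fun _ _ hij => hindep.indepFun hij
  have hsq : Measurable fun x : ℝ => x ^ 2 := measurable_id.pow_const 2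
  have hmean_lim := strong_law_ae_real ε (hint 0) hpairwise hidentDistrib
  have hmeanSq_lim := strong_law_ae_real (fun k ω => ε k ω ^ 2) (hsqint 0)
    (fun _ _ hij => (hpairwise hij).comp hsq hsq) fun k => (hidentDistrib k).comp hsq
  rw [hmean 0] at hmean_lim
  rw [hvar 0] at hmeanSq_lim
  filter_upwards [hmean_lim, hmeanSq_lim] with ω hω hωSq
  exact tendsto_hoyerSeq_one_of_tendsto_zero
    (tendsto_abs_sum_div_sqrt_mul_sqrt_sum_sq_zero hσ2 hω hωSq)
end

section
/- Let (a_k)_{k≥1} be a sequence of nonnegative reals such that (1/n) Σ_{k=1}^n a_k → ā and (1/n) Σ_{k=1}^n a_k² → ā̄² with ā̄² > 0 as n → ∞. Then h_n(a_1, …, a_n) → 1 − ā / √(ā̄²) as n → ∞. -/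
open Filter

/-- For a nonnegative anomaly sequence with Cesàro averages `(1/n) Σ a_k → ā` and
`(1/n) Σ a_k² → ā̄² > 0`, the Hoyer index satisfies `h_n(a₁,…,a_n) → 1 - ā/√(ā̄²)`. -/
theorem hoyerSeq_tendsto_of_cesaro
    (a : ℕ → ℝ) (abar a2bar : ℝ)
    (ha_nonneg : ∀ k, 0 ≤ a k)
    (hcesaro : Tendsto (fun n : ℕ => (∑ k ∈ Finset.range n, a k) / n) atTop (nhds abar))
    (hcesaro2 :
      Tendsto (fun n : ℕ => (∑ k ∈ Finset.range n, (a k) ^ 2) / n) atTop (nhds a2bar))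
    (ha2bar : 0 < a2bar) :
    Tendsto (fun n : ℕ => hoyerSeq n a) atTop
      (nhds (1 - abar / Real.sqrt a2bar)) := by
  have hsqrtR : Tendsto Real.sqrt atTop atTop := by
    apply tendsto_atTop_atTop.mpr
    intro b
    refine ⟨(max b 0)^2, fun x hx => ?_⟩
    calc b ≤ max b 0 := le_max_left _ _
    _ = Real.sqrt ((max b 0)^2) := (Real.sqrt_sq (le_max_right _ _)).symm
    _ ≤ Real.sqrt x := Real.sqrt_le_sqrt hx
  have hsqrtA : Tendsto (fun n : ℕ => Real.sqrt n) atTop atTop :=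
    hsqrtR.comp tendsto_natCast_atTop_atTop
  have hinv : Tendsto (fun n : ℕ => (Real.sqrt n - 1)⁻¹) atTop (nhds 0) := by
    apply Tendsto.inv_tendsto_atTop
    simpa [sub_eq_add_neg] using tendsto_atTop_add_const_right atTop (-1) hsqrtA
  have hratio : Tendsto
      (fun n : ℕ => ((∑ k ∈ Finset.range n, a k) / n) /
        Real.sqrt ((∑ k ∈ Finset.range n, (a k) ^ 2) / n)) atTop
      (nhds (abar / Real.sqrt a2bar)) :=
    hcesaro.div hcesaro2.sqrt (Real.sqrt_pos.mpr ha2bar).ne'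
  have hone : Tendsto (fun _ : ℕ => (1:ℝ)) atTop (nhds 1) := tendsto_const_nhds
  have key : Tendsto
      (fun n : ℕ => (1 + (Real.sqrt n - 1)⁻¹) *
        (1 - ((∑ k ∈ Finset.range n, a k) / n) /
          Real.sqrt ((∑ k ∈ Finset.range n, (a k) ^ 2) / n))) atTop
      (nhds (1 - abar / Real.sqrt a2bar)) := by
    have := (hone.add hinv).mul (hone.sub hratio)
    simpa using this
  refine key.congr' ?_
  have hq_pos : ∀ᶠ n : ℕ in atTop, 0 < (∑ k ∈ Finset.range n, (a k) ^ 2) / n :=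
    hcesaro2.eventually (eventually_gt_nhds ha2bar)
  filter_upwards [hq_pos, eventually_ge_atTop 2] with n hqn hn
  have hn0 : (0:ℝ) < n := by exact_mod_cast (by omega : 0 < n)
  have hS : 0 ≤ ∑ k ∈ Finset.range n, a k := Finset.sum_nonneg fun k _ => ha_nonneg k
  set S := ∑ k ∈ Finset.range n, a k with hSdef
  set Q := ∑ k ∈ Finset.range n, (a k) ^ 2 with hQdef
  set u := Real.sqrt n with hu
  set p := Real.sqrt (Q / n) with hp
  have hp0 : 0 < p := Real.sqrt_pos.mpr hqn
  have hu1 : 1 < u := by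
    rw [hu]
    have : (1:ℝ) < n := by exact_mod_cast (by omega : 1 < n)
    calc (1:ℝ) = Real.sqrt 1 := Real.sqrt_one.symm
    _ < Real.sqrt n := Real.sqrt_lt_sqrt (by norm_num) this
  have hu0 : 0 < u := lt_trans one_pos hu1
  have hu2 : u ^ 2 = n := Real.sq_sqrt hn0.le
  have hsqQ : Real.sqrt Q = u * p := by
    have : Q = (n:ℝ) * (Q / n) := by field_simp
    rw [this, Real.sqrt_mul hn0.le, hu, hp]
  show (1 + (u - 1)⁻¹) * (1 - S / n / p) = hoyerSeq n a
  unfold hoyerSeq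
  rw [← hSdef, ← hQdef, ← hu, hsqQ, abs_of_nonneg hS, ← hu2]
  have h1 : u - 1 ≠ 0 := by linarith
  field_simp
  ring
end

section
/- Let (a_k)_{k≥1} be a uniformly bounded sequence of nonnegative reals such that (1/n) Σ_{k=1}^n a_k → ā and (1/n) Σ_{k=1}^n a_k² → ā̄² with ā̄² > 0 as n → ∞, and let (ε_k)_{k≥1} be i.i.d. with mean zero and variance σ_n² where σ_n² → ∞ in an iterated-limit sense. Then the almost-sure limits satisfy: lim_{σ²→∞} lim_{n→∞} h_n(a_1+ε_1, …, a_n+ε_n) = 1 almost surely; equivalently, (1 − ā/√(ā̄²)) + lim_{σ²→∞} ā σ² / ( √(ā̄² (ā̄² + σ²)) (√(ā̄²) + √(ā̄² + σ²)) ) = 1. -/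
open MeasureTheory ProbabilityTheory Filter

/-- The asymptotic bias induced on the Hoyer index by additive white noise of variance `s2`. -/
noncomputable def hoyerBias (abar a2bar s2 : ℝ) : ℝ :=
  abar * s2 /
    (Real.sqrt (a2bar * (a2bar + s2)) * (Real.sqrt a2bar + Real.sqrt (a2bar + s2)))

/-!
Write `h_n = √n (1 - ρ_n) / (√n - 1)`, where `ρ_n` is the ratio of the absolute mean to the
root mean square of the noisy sample; so a limit `ℓ` of `h_n` forces `ρ_n → 1 - ℓ ≥ 0`. By the
strong law the mean of `a + ε` tends to `ā` and the root mean square of `ε` to `σ`, while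
Minkowski's inequality bounds the root mean square of `a + ε` below by `σ - √ā̄²`. Hence
`1 - |ā| / (σ - √ā̄²) ≤ L σ² ≤ 1`, and both bounds tend to `1`. Bounding rather than computing
`lim ρ_n` avoids the cross term `Σ a_k ε_k`, whose summands are not identically distributed.
The second claim is the identity `ā / √ā̄² - ā / √(ā̄² + σ²) = hoyerBias ā ā̄² σ²`.
-/

open Finset Topology

theorem Real.sqrt_sum_add_sq_le {ι : Type*} (s : Finset ι) (f g : ι → ℝ) :
    √(∑ i ∈ s, (f i + g i) ^ 2) ≤ √(∑ i ∈ s, f i ^ 2) + √(∑ i ∈ s, g i ^ 2) := by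
  have hF : √(∑ i ∈ s, f i ^ 2) ^ 2 = ∑ i ∈ s, f i ^ 2 := Real.sq_sqrt (by positivity)
  have hG : √(∑ i ∈ s, g i ^ 2) ^ 2 = ∑ i ∈ s, g i ^ 2 := Real.sq_sqrt (by positivity)
  have hcs := Real.sum_mul_le_sqrt_mul_sqrt s f g
  have hexpand : ∑ i ∈ s, (f i + g i) ^ 2
      = ∑ i ∈ s, f i ^ 2 + 2 * ∑ i ∈ s, f i * g i + ∑ i ∈ s, g i ^ 2 := by
    simp only [add_sq, sum_add_distrib, mul_sum, mul_assoc]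
  rw [Real.sqrt_le_left (by positivity), hexpand]
  nlinarith

noncomputable def meanRmsRatio (n : ℕ) (x : ℕ → ℝ) : ℝ :=
  |(∑ k ∈ range n, x k) / n| / √((∑ k ∈ range n, x k ^ 2) / n)

lemma meanRmsRatio_nonneg (n : ℕ) (x : ℕ → ℝ) : 0 ≤ meanRmsRatio n x := by
  unfold meanRmsRatio; positivity

lemma one_sub_inv_sqrt_mul_hoyerSeq {n : ℕ} (hn : 2 ≤ n) (x : ℕ → ℝ) :
    (1 - (√n)⁻¹) * hoyerSeq n x = 1 - meanRmsRatio n x := by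
  have hn0 : (0 : ℝ) < n := by exact_mod_cast (by omega : 0 < n)
  have hsqrt : 1 < √(n : ℝ) := Real.lt_sqrt_of_sq_lt (by exact_mod_cast (by omega : 1 ^ 2 < n))
  have hsq : √(n : ℝ) * √n = n := Real.mul_self_sqrt hn0.le
  unfold hoyerSeq meanRmsRatio
  rw [Real.sqrt_div' _ hn0.le, abs_div, abs_of_pos hn0]
  set r := √(n : ℝ)
  rw [← hsq]
  have hr1 : r - 1 ≠ 0 := by linarith
  field_simp

lemma tendsto_meanRmsRatio {x : ℕ → ℝ} {ℓ : ℝ}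
    (h : Tendsto (fun n => hoyerSeq n x) atTop (𝓝 ℓ)) :
    Tendsto (fun n => meanRmsRatio n x) atTop (𝓝 (1 - ℓ)) := by
  have hinv : Tendsto (fun n : ℕ => (√(n : ℝ))⁻¹) atTop (𝓝 0) :=
    (Real.tendsto_sqrt_atTop.comp tendsto_natCast_atTop_atTop).inv_tendsto_atTop
  have := (((tendsto_const_nhds (x := (1 : ℝ))).sub hinv).mul h).const_sub 1
  rw [sub_zero, one_mul] at this
  refine this.congr' ?_
  filter_upwards [eventually_ge_atTop 2] with n hn
  rw [one_sub_inv_sqrt_mul_hoyerSeq hn]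
  ring

lemma sqrt_mean_sq_sub_le (n : ℕ) (x y : ℕ → ℝ) :
    √((∑ k ∈ range n, y k ^ 2) / n) - √((∑ k ∈ range n, x k ^ 2) / n)
      ≤ √((∑ k ∈ range n, (x k + y k) ^ 2) / n) := by
  have hmink : √(∑ k ∈ range n, y k ^ 2)
      ≤ √(∑ k ∈ range n, (x k + y k) ^ 2) + √(∑ k ∈ range n, x k ^ 2) := by
    simpa using Real.sqrt_sum_add_sq_le (range n) (fun k => x k + y k) (fun k => -x k)
  simp only [Real.sqrt_div' _ (Nat.cast_nonneg n)]
  rw [← sub_div]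
  gcongr
  linarith

lemma one_sub_le_of_tendsto_hoyerSeq {x y : ℕ → ℝ} {m α β ℓ : ℝ}
    (hmean : Tendsto (fun n : ℕ => (∑ k ∈ range n, (x k + y k)) / n) atTop (𝓝 m))
    (hx : Tendsto (fun n : ℕ => √((∑ k ∈ range n, x k ^ 2) / n)) atTop (𝓝 α))
    (hy : Tendsto (fun n : ℕ => √((∑ k ∈ range n, y k ^ 2) / n)) atTop (𝓝 β))
    (hαβ : α < β) (hh : Tendsto (fun n => hoyerSeq n (fun k => x k + y k)) atTop (𝓝 ℓ)) :
    1 - |m| / (β - α) ≤ ℓ := by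
  have hgap := hy.sub hx
  have hbound : Tendsto (fun n : ℕ => |(∑ k ∈ range n, (x k + y k)) / n|
      / (√((∑ k ∈ range n, y k ^ 2) / n) - √((∑ k ∈ range n, x k ^ 2) / n)))
      atTop (𝓝 (|m| / (β - α))) := hmean.abs.div hgap (sub_ne_zero.2 hαβ.ne')
  have hle : 1 - ℓ ≤ |m| / (β - α) := by
    refine le_of_tendsto_of_tendsto (tendsto_meanRmsRatio hh) hbound ?_
    filter_upwards [hgap.eventually (eventually_gt_nhds (sub_pos.2 hαβ))] with n hn
    exact div_le_div_of_nonneg_left (abs_nonneg _) hn (sqrt_mean_sq_sub_le n x y)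
  linarith

lemma le_one_of_tendsto_hoyerSeq {x : ℕ → ℝ} {ℓ : ℝ}
    (h : Tendsto (fun n => hoyerSeq n x) atTop (𝓝 ℓ)) : ℓ ≤ 1 :=
  sub_nonneg.1 (ge_of_tendsto' (tendsto_meanRmsRatio h) (meanRmsRatio_nonneg · x))

lemma tendsto_one_sub_div_of_tendsto_atTop {α : Type*} {l : Filter α} {f : α → ℝ} (c : ℝ)
    (hf : Tendsto f l atTop) : Tendsto (fun x => 1 - c / f x) l (𝓝 1) := by
  simpa using tendsto_const_nhds.sub (tendsto_const_nhds.div_atTop hf)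

lemma ae_tendsto_sum_comp_div_of_iIndepFun {Ω : Type*} {mΩ : MeasurableSpace Ω} {μ : Measure Ω}
    {X : ℕ → Ω → ℝ} (hmeas : ∀ k, Measurable (X k)) (hindep : iIndepFun X μ)
    (hident : ∀ k, μ.map (X k) = μ.map (X 0)) {g : ℝ → ℝ} (hg : Measurable g)
    (hint : Integrable (fun ω => g (X 0 ω)) μ) :
    ∀ᵐ ω ∂μ, Tendsto (fun n : ℕ => (∑ k ∈ range n, g (X k ω)) / n) atTop
      (𝓝 (∫ ω, g (X 0 ω) ∂μ)) :=
  strong_law_ae_real (fun k ω => g (X k ω)) hint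
    (fun _ _ hij => (hindep.comp (fun _ => g) fun _ => hg).indepFun hij)
    fun k => IdentDistrib.comp
      ⟨(hmeas k).aemeasurable, (hmeas 0).aemeasurable, hident k⟩ hg

lemma one_sub_div_sqrt_add_hoyerBias (abar : ℝ) {a2bar s2 : ℝ} (ha2 : 0 < a2bar)
    (hs2 : 0 ≤ s2) :
    (1 - abar / √a2bar) + hoyerBias abar a2bar s2 = 1 - abar / √(a2bar + s2) := by
  have hA : 0 < √a2bar := Real.sqrt_pos.2 ha2
  have hB : 0 < √(a2bar + s2) := Real.sqrt_pos.2 (by linarith)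
  have hs2_eq : s2 = √(a2bar + s2) ^ 2 - √a2bar ^ 2 := by
    rw [Real.sq_sqrt ha2.le, Real.sq_sqrt (by linarith)]; ring
  unfold hoyerBias
  rw [Real.sqrt_mul ha2.le]
  set A := √a2bar
  set B := √(a2bar + s2)
  rw [hs2_eq]
  field_simp
  ring

theorem hoyer_divergent_noise_tendsto_one_general
    {Ω : Type*} [MeasureSpace Ω] [IsProbabilityMeasure (ℙ : Measure Ω)]
    (a : ℕ → ℝ) (abar a2bar : ℝ)
    (hcesaro : Tendsto (fun n : ℕ => (∑ k ∈ Finset.range n, a k) / n) atTop (nhds abar))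
    (hcesaro2 :
      Tendsto (fun n : ℕ => (∑ k ∈ Finset.range n, (a k) ^ 2) / n) atTop (nhds a2bar))
    (ha2bar : 0 < a2bar)
    (ε : ℝ → ℕ → Ω → ℝ) (L : ℝ → ℝ)
    (hmeas : ∀ s2 > (0:ℝ), ∀ k, Measurable (ε s2 k))
    (hindep : ∀ s2 > (0:ℝ), iIndepFun (ε s2) ℙ)
    (hident : ∀ s2 > (0:ℝ), ∀ k, Measure.map (ε s2 k) ℙ = Measure.map (ε s2 0) ℙ)
    (hint : ∀ s2 > (0:ℝ), ∀ k, Integrable (ε s2 k) ℙ)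
    (hmean : ∀ s2 > (0:ℝ), ∀ k, ∫ ω, ε s2 k ω = 0)
    (hsqint : ∀ s2 > (0:ℝ), ∀ k, Integrable (fun ω => (ε s2 k ω) ^ 2) ℙ)
    (hvar : ∀ s2 > (0:ℝ), ∀ k, ∫ ω, (ε s2 k ω) ^ 2 = s2)
    (hL : ∀ s2 > (0:ℝ),
      ∀ᵐ ω ∂(ℙ : Measure Ω),
        Tendsto (fun n : ℕ => hoyerSeq n (fun k => a k + ε s2 k ω)) atTop
          (nhds (L s2))) :
    Tendsto L atTop (nhds 1) ∧
      Tendsto (fun s2 : ℝ => (1 - abar / Real.sqrt a2bar) + hoyerBias abar a2bar s2)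
        atTop (nhds 1) := by
  have hbounds : ∀ s2 > a2bar, 1 - |abar| / (√s2 - √a2bar) ≤ L s2 ∧ L s2 ≤ 1 := by
    intro s2 hs2
    have hs0 : 0 < s2 := ha2bar.trans hs2
    have hlaw := ae_tendsto_sum_comp_div_of_iIndepFun (hmeas s2 hs0) (hindep s2 hs0)
      (hident s2 hs0) (g := fun t => t) measurable_id (hint s2 hs0 0)
    have hlaw2 := ae_tendsto_sum_comp_div_of_iIndepFun (hmeas s2 hs0) (hindep s2 hs0)
      (hident s2 hs0) (g := fun t => t ^ 2) (by fun_prop) (hsqint s2 hs0 0)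
    obtain ⟨ω, hLω, hmeanω, hvarω⟩ := ((hL s2 hs0).and (hlaw.and hlaw2)).exists
    rw [hmean s2 hs0 0] at hmeanω
    rw [hvar s2 hs0 0] at hvarω
    have hsum : Tendsto (fun n : ℕ => (∑ k ∈ range n, (a k + ε s2 k ω)) / n) atTop
        (𝓝 abar) := by
      simpa only [sum_add_distrib, add_div, add_zero] using hcesaro.add hmeanω
    exact ⟨one_sub_le_of_tendsto_hoyerSeq hsum hcesaro2.sqrt hvarω.sqrt
      (Real.sqrt_lt_sqrt ha2bar.le hs2) hLω, le_one_of_tendsto_hoyerSeq hLω⟩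
  have hgap : Tendsto (fun s2 => √s2 - √a2bar) atTop atTop := by
    simpa only [sub_eq_add_neg] using
      tendsto_atTop_add_const_right _ (-√a2bar) Real.tendsto_sqrt_atTop
  refine ⟨tendsto_of_tendsto_of_tendsto_of_le_of_le'
    (tendsto_one_sub_div_of_tendsto_atTop |abar| hgap) tendsto_const_nhds ?_ ?_, ?_⟩
  · filter_upwards [eventually_gt_atTop a2bar] with s2 hs2 using (hbounds s2 hs2).1
  · filter_upwards [eventually_gt_atTop a2bar] with s2 hs2 using (hbounds s2 hs2).2
  · refine (tendsto_one_sub_div_of_tendsto_atTop abar (Real.tendsto_sqrt_atTop.comp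
      (tendsto_atTop_add_const_left _ a2bar tendsto_id))).congr' ?_
    filter_upwards [eventually_ge_atTop 0] with s2 hs2
    exact (one_sub_div_sqrt_add_hoyerBias abar ha2bar hs2).symm

/-- Corollary 1: for a uniformly bounded nonnegative anomaly sequence with Cesàro averages
`ā` and `ā̄² > 0`, and for each noise level `σ² > 0` a family of i.i.d. mean-zero noise
variables with variance `σ²` whose Hoyer indices `h_n(a+ε)` converge a.s. to `L σ²`,
we have the iterated limit `lim_{σ²→∞} lim_{n→∞} h_n(a+ε) = 1`; equivalently,
`(1 - ā/√ā̄²) + lim_{σ²→∞} bias(σ²) = 1`. -/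
theorem hoyer_divergent_noise_tendsto_one
    {Ω : Type*} [MeasureSpace Ω] [IsProbabilityMeasure (ℙ : Measure Ω)]
    (a : ℕ → ℝ) (abar a2bar : ℝ)
    (ha_nonneg : ∀ k, 0 ≤ a k)
    (ha_bdd : ∃ C, ∀ k, a k ≤ C)
    (hcesaro : Tendsto (fun n : ℕ => (∑ k ∈ Finset.range n, a k) / n) atTop (nhds abar))
    (hcesaro2 :
      Tendsto (fun n : ℕ => (∑ k ∈ Finset.range n, (a k) ^ 2) / n) atTop (nhds a2bar))
    (ha2bar : 0 < a2bar)
    (ε : ℝ → ℕ → Ω → ℝ) (L : ℝ → ℝ)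
    (hmeas : ∀ s2 > (0:ℝ), ∀ k, Measurable (ε s2 k))
    (hindep : ∀ s2 > (0:ℝ), iIndepFun (ε s2) ℙ)
    (hident : ∀ s2 > (0:ℝ), ∀ k, Measure.map (ε s2 k) ℙ = Measure.map (ε s2 0) ℙ)
    (hint : ∀ s2 > (0:ℝ), ∀ k, Integrable (ε s2 k) ℙ)
    (hmean : ∀ s2 > (0:ℝ), ∀ k, ∫ ω, ε s2 k ω = 0)
    (hsqint : ∀ s2 > (0:ℝ), ∀ k, Integrable (fun ω => (ε s2 k ω) ^ 2) ℙ)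
    (hvar : ∀ s2 > (0:ℝ), ∀ k, ∫ ω, (ε s2 k ω) ^ 2 = s2)
    (hL : ∀ s2 > (0:ℝ),
      ∀ᵐ ω ∂(ℙ : Measure Ω),
        Tendsto (fun n : ℕ => hoyerSeq n (fun k => a k + ε s2 k ω)) atTop
          (nhds (L s2))) :
    Tendsto L atTop (nhds 1) ∧
      Tendsto (fun s2 : ℝ => (1 - abar / Real.sqrt a2bar) + hoyerBias abar a2bar s2)
        atTop (nhds 1) :=
  hoyer_divergent_noise_tendsto_one_general a abar a2bar hcesaro hcesaro2 ha2bar ε L hmeas hindep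
    hident hint hmean hsqint hvar hL
end

section
/- Let (a_k)_{k≥1} be a uniformly bounded sequence of nonnegative reals such that (1/n) Σ_{k=1}^n a_k → ā and (1/n) Σ_{k=1}^n a_k² → ā̄² with ā̄² > 0 as n → ∞. Let (ε_k)_{k≥1} be i.i.d. with mean zero and variance σ² ∈ (0, ∞). Define the corrected Hoyer index g_n(x) = h_n(x) − ā σ² / ( √(ā̄² (ā̄² + σ²)) (√(ā̄²) + √(ā̄² + σ²)) ). Then g_n(a_1+ε_1, …, a_n+ε_n) − h_n(a_1, …, a_n) → 0 almost surely as n → ∞; in particular g_n(a+ε) → 1 − ā/√(ā̄²) almost surely. -/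
open MeasureTheory ProbabilityTheory Filter

/-- The corrected Hoyer index `g_n(x) = h_n(x) - bias(ā, ā̄², σ²)`. -/
noncomputable def correctedHoyerSeq (abar a2bar s2 : ℝ) (n : ℕ) (x : ℕ → ℝ) : ℝ :=
  hoyerSeq n x - hoyerBias abar a2bar s2

/-! Almost surely, the strong law of large numbers gives `n⁻¹ Σ ε_k → 0` and `n⁻¹ Σ ε_k² → σ²`,
and a weighted version gives `n⁻¹ Σ a_k ε_k → 0`; hence the Cesàro means of `a + ε` and
`(a + ε)²` tend to `ā` and `ā̄² + σ²`. Up to the factor `√n / (√n - 1) → 1`, the Hoyer index is a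
continuous function of these two means, so `h_n(a + ε) → 1 - ā / √(ā̄² + σ²)` while
`h_n(a) → 1 - ā / √ā̄²`, and the bias is exactly the difference of the two limits.

The summands `a_k ε_k` are not identically distributed, so the weighted law is proved by
Rajchman's argument: the second moment of a partial sum grows linearly in its length, so the
partial sums at the squares `n²` and their oscillations on the blocks `[n², (n + 1)²)`, normalized
by `n²`, have summable expectations and therefore tend to zero almost surely. -/

open Finset

lemma tendsto_sqrt_natCast_div_sqrt_natCast_sub_one :
    Tendsto (fun n : ℕ => √n / (√n - 1)) atTop (nhds 1) := by
  have hsqrt : Tendsto (fun n : ℕ => √(n : ℝ)) atTop atTop :=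
    Real.tendsto_sqrt_atTop.comp tendsto_natCast_atTop_atTop
  have h : Tendsto (fun t : ℝ => 1 + (t - 1)⁻¹) atTop (nhds 1) := by
    simpa [sub_eq_add_neg] using tendsto_const_nhds.add (tendsto_inv_atTop_zero.comp
      (tendsto_atTop_add_const_right _ (-1) (tendsto_id (α := ℝ))))
  refine (h.congr' (f₂ := fun t => t / (t - 1)) ?_).comp hsqrt
  filter_upwards [eventually_gt_atTop 1] with t ht
  field_simp [(sub_pos.2 ht).ne']
  ring

-- No hypothesis is needed: when `n ≤ 1` or `∑ x k ^ 2 = 0`, both sides divide by zero alike.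
lemma hoyerSeq_eq_mul (n : ℕ) (x : ℕ → ℝ) :
    hoyerSeq n x = (1 - (|∑ k ∈ range n, x k| / n) / √((∑ k ∈ range n, x k ^ 2) / n)) *
      (√n / (√n - 1)) := by
  rcases n.eq_zero_or_pos with rfl | hn
  · simp [hoyerSeq]
  have hsqrt : (0 : ℝ) < √n := Real.sqrt_pos.2 (by exact_mod_cast hn)
  rw [hoyerSeq, Real.sqrt_div' _ (Nat.cast_nonneg n), ← Real.sq_sqrt (Nat.cast_nonneg (n : ℕ)),
    Real.sqrt_sq hsqrt.le]
  rcases eq_or_ne (√(∑ k ∈ range n, x k ^ 2)) 0 with h | h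
  · simp [h, div_eq_mul_inv]
  field_simp

lemma tendsto_hoyerSeq {x : ℕ → ℝ} {S Q : ℝ} (hQ : 0 < Q)
    (hS : Tendsto (fun n : ℕ => (∑ k ∈ range n, x k) / n) atTop (nhds S))
    (hQ' : Tendsto (fun n : ℕ => (∑ k ∈ range n, x k ^ 2) / n) atTop (nhds Q)) :
    Tendsto (fun n => hoyerSeq n x) atTop (nhds (1 - |S| / √Q)) := by
  have habs : Tendsto (fun n : ℕ => |∑ k ∈ range n, x k| / n) atTop (nhds |S|) :=
    hS.abs.congr fun n => by rw [abs_div, Nat.abs_cast]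
  simpa [hoyerSeq_eq_mul] using (tendsto_const_nhds.sub (habs.div (hQ'.sqrt)
    (Real.sqrt_pos.2 hQ).ne')).mul tendsto_sqrt_natCast_div_sqrt_natCast_sub_one

lemma hoyerBias_eq_sub {abar a2bar s2 : ℝ} (ha : 0 < a2bar) (hs : 0 < a2bar + s2) :
    hoyerBias abar a2bar s2 = abar / √a2bar - abar / √(a2bar + s2) := by
  have hs2 : s2 = √(a2bar + s2) ^ 2 - √a2bar ^ 2 := by
    rw [Real.sq_sqrt ha.le, Real.sq_sqrt hs.le]; ring
  rw [hoyerBias, Real.sqrt_mul ha.le]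
  set p := √a2bar
  set q := √(a2bar + s2)
  have hp : 0 < p := Real.sqrt_pos.2 ha
  have hq : 0 < q := Real.sqrt_pos.2 hs
  rw [div_sub_div _ _ hp.ne' hq.ne',
    div_eq_div_iff (by positivity) (by positivity), hs2]
  ring

lemma tendsto_cesaro_add {x y : ℕ → ℝ} {s t : ℝ}
    (hx : Tendsto (fun n : ℕ => (∑ k ∈ range n, x k) / n) atTop (nhds s))
    (hy : Tendsto (fun n : ℕ => (∑ k ∈ range n, y k) / n) atTop (nhds t)) :
    Tendsto (fun n : ℕ => (∑ k ∈ range n, (x k + y k)) / n) atTop (nhds (s + t)) :=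
  (hx.add hy).congr fun n => by rw [sum_add_distrib, add_div]

lemma tendsto_cesaro_add_sq {x y : ℕ → ℝ} {p r q : ℝ}
    (hx : Tendsto (fun n : ℕ => (∑ k ∈ range n, x k ^ 2) / n) atTop (nhds p))
    (hxy : Tendsto (fun n : ℕ => (∑ k ∈ range n, x k * y k) / n) atTop (nhds r))
    (hy : Tendsto (fun n : ℕ => (∑ k ∈ range n, y k ^ 2) / n) atTop (nhds q)) :
    Tendsto (fun n : ℕ => (∑ k ∈ range n, (x k + y k) ^ 2) / n) atTop
      (nhds (p + 2 * r + q)) :=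
  ((hx.add (hxy.const_mul 2)).add hy).congr fun n => by
    simp only [add_sq, sum_add_distrib, mul_assoc, ← mul_sum]
    ring

noncomputable def squareBlockDeviation (u : ℕ → ℝ) (n : ℕ) : ℝ :=
  (u (n ^ 2) ^ 2 + ∑ m ∈ Ico (n ^ 2) ((n + 1) ^ 2), (u m - u (n ^ 2)) ^ 2) / n ^ 4

lemma squareBlockDeviation_nonneg (u : ℕ → ℝ) (n : ℕ) : 0 ≤ squareBlockDeviation u n := by
  unfold squareBlockDeviation; positivity

lemma tendsto_div_natCast_of_tendsto_squareBlockDeviation {u : ℕ → ℝ}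
    (hu : Tendsto (squareBlockDeviation u) atTop (nhds 0)) :
    Tendsto (fun m : ℕ => u m / m) atTop (nhds 0) := by
  have hsqrt : Tendsto Nat.sqrt atTop atTop :=
    tendsto_atTop_atTop.2 fun b => ⟨b ^ 2, fun m hm => Nat.le_sqrt'.2 hm⟩
  have hbound : Tendsto (fun m => 2 * √(squareBlockDeviation u (Nat.sqrt m))) atTop (nhds 0) := by
    simpa using ((hu.comp hsqrt).sqrt).const_mul 2
  refine squeeze_zero_norm' ?_ hbound
  filter_upwards [eventually_ge_atTop 1] with m hm
  set n := Nat.sqrt m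
  have hnm : n ^ 2 ≤ m := Nat.sqrt_le' m
  have hblock : m ∈ Ico (n ^ 2) ((n + 1) ^ 2) := mem_Ico.2 ⟨hnm, Nat.lt_succ_sqrt' m⟩
  have hn2 : (0 : ℝ) < n ^ 2 := by positivity
  have hfirst : |u (n ^ 2) / n ^ 2| ≤ √(squareBlockDeviation u n) := by
    refine Real.abs_le_sqrt ?_
    rw [squareBlockDeviation, div_pow, ← pow_mul]
    gcongr
    exact le_add_of_nonneg_right (sum_nonneg fun _ _ => sq_nonneg _)
  have hsecond : |(u m - u (n ^ 2)) / n ^ 2| ≤ √(squareBlockDeviation u n) := by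
    refine Real.abs_le_sqrt ?_
    rw [squareBlockDeviation, div_pow, ← pow_mul]
    gcongr
    exact le_add_of_nonneg_of_le (sq_nonneg _)
      (single_le_sum (fun i _ => sq_nonneg (u i - u (n ^ 2))) hblock)
  calc ‖u m / m‖ ≤ |u m / n ^ 2| := by
        rw [Real.norm_eq_abs, abs_div, abs_div, abs_of_pos hn2]
        gcongr
        exact_mod_cast hnm
    _ = |u (n ^ 2) / n ^ 2 + (u m - u (n ^ 2)) / n ^ 2| := by ring_nf
    _ ≤ 2 * √(squareBlockDeviation u n) := by
        linarith [abs_add_le (u (n ^ 2) / n ^ 2) ((u m - u (n ^ 2)) / n ^ 2)]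

lemma ae_summable_norm_of_summable_integral_norm {α E : Type*} [NormedAddCommGroup E]
    {mα : MeasurableSpace α} {μ : Measure α} {f : ℕ → α → E} (hf : ∀ n, Integrable (f n) μ)
    (h : Summable fun n => ∫ x, ‖f n x‖ ∂μ) :
    ∀ᵐ x ∂μ, Summable fun n => ‖f n x‖ := by
  refine summable_norm_of_tsum_eLpNorm_ne_top le_rfl (fun n => (hf n).1) ?_
  simp_rw [eLpNorm_one_eq_lintegral_enorm, ← ofReal_integral_norm_eq_lintegral_enorm (hf _),
    ← ENNReal.ofReal_tsum_of_nonneg (fun n => integral_nonneg fun _ => norm_nonneg _) h]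
  exact ENNReal.ofReal_ne_top

section StrongLaw

variable {Ω : Type*} {mΩ : MeasurableSpace Ω} {μ : Measure Ω} [IsFiniteMeasure μ]

lemma integral_sq_sum_le_card_mul {ι : Type*} {X : ι → Ω → ℝ} {V : ℝ}
    (hX : ∀ i, MemLp (X i) 2 μ) (hindep : Pairwise fun i j => IndepFun (X i) (X j) μ)
    (hmean : ∀ i, μ[X i] = 0) (hV : ∀ i, Var[X i; μ] ≤ V) (s : Finset ι) :
    ∫ ω, (∑ i ∈ s, X i ω) ^ 2 ∂μ ≤ #s * V := by
  have hfun : (fun ω => ∑ i ∈ s, X i ω) = ∑ i ∈ s, X i := by ext; simp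
  have hmean_sum : μ[fun ω => ∑ i ∈ s, X i ω] = 0 := by
    rw [integral_finsetSum s fun i _ => (hX i).integrable one_le_two]
    exact sum_eq_zero fun i _ => hmean i
  rw [← variance_of_integral_eq_zero (memLp_finsetSum s fun i _ => hX i).aemeasurable hmean_sum,
    hfun, IndepFun.variance_sum (fun i _ => hX i) fun i _ j _ hij => hindep hij, ← nsmul_eq_mul]
  exact sum_le_card_nsmul _ _ _ fun i _ => hV i

section

variable {X : ℕ → Ω → ℝ} {V : ℝ} (hX : ∀ k, MemLp (X k) 2 μ)
  (hindep : Pairwise fun i j => IndepFun (X i) (X j) μ) (hmean : ∀ k, μ[X k] = 0)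
  (hV : ∀ k, Var[X k; μ] ≤ V)
include hX hindep hmean hV

lemma integral_squareBlockDeviation_le (n : ℕ) :
    ∫ ω, squareBlockDeviation (fun m => ∑ k ∈ range m, X k ω) n ∂μ ≤ 10 * V / n ^ 2 := by
  rcases n.eq_zero_or_pos with rfl | hn
  · simp [squareBlockDeviation]
  have hV0 : 0 ≤ V := (variance_nonneg _ _).trans (hV 0)
  have hsq (s : Finset ℕ) : Integrable (fun ω => (∑ k ∈ s, X k ω) ^ 2) μ :=
    (memLp_finsetSum s fun k _ => hX k).integrable_sq
  have hblock (m : ℕ) (hm : m ∈ Ico (n ^ 2) ((n + 1) ^ 2)) :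
      ∫ ω, (∑ k ∈ range m, X k ω - ∑ k ∈ range (n ^ 2), X k ω) ^ 2 ∂μ ≤ (2 * n + 1) * V := by
    rw [mem_Ico] at hm
    simp_rw [← sum_Ico_eq_sub _ hm.1]
    refine (integral_sq_sum_le_card_mul hX hindep hmean hV _).trans ?_
    gcongr
    rw [Nat.card_Ico]
    have : m - n ^ 2 ≤ 2 * n + 1 := by rw [add_sq] at hm; omega
    exact_mod_cast this
  have hblock_int (m : ℕ) (hm : m ∈ Ico (n ^ 2) ((n + 1) ^ 2)) :
      Integrable (fun ω => (∑ k ∈ range m, X k ω - ∑ k ∈ range (n ^ 2), X k ω) ^ 2) μ := by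
    rw [mem_Ico] at hm
    simp_rw [← sum_Ico_eq_sub _ hm.1]
    exact hsq _
  have hcard : (#(Ico (n ^ 2) ((n + 1) ^ 2)) : ℝ) = 2 * n + 1 := by
    rw [Nat.card_Ico, show (n + 1) ^ 2 = n ^ 2 + (2 * n + 1) by ring, Nat.add_sub_cancel_left]
    push_cast; ring
  unfold squareBlockDeviation
  rw [integral_div, integral_add (hsq _) (integrable_finsetSum _ hblock_int),
    integral_finsetSum _ hblock_int, div_le_div_iff₀ (by positivity) (by positivity)]
  have hfirst := integral_sq_sum_le_card_mul hX hindep hmean hV (range (n ^ 2))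
  have hrest := sum_le_sum hblock
  rw [sum_const, nsmul_eq_mul, hcard] at hrest
  rw [card_range, Nat.cast_pow] at hfirst
  have hn1 : (1 : ℝ) ≤ n := by exact_mod_cast hn
  calc _ ≤ ((n : ℝ) ^ 2 * V + (2 * n + 1) * ((2 * n + 1) * V)) * n ^ 2 := by gcongr
    _ = 10 * V * n ^ 4 - V * n ^ 2 * (5 * n + 1) * (n - 1) := by ring
    _ ≤ 10 * V * n ^ 4 := sub_le_self _ (by have := sub_nonneg.2 hn1; positivity)

theorem strong_law_ae_of_variance_le :
    ∀ᵐ ω ∂μ, Tendsto (fun n : ℕ => (∑ k ∈ range n, X k ω) / n) atTop (nhds 0) := by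
  have hint (n : ℕ) :
      Integrable (fun ω => squareBlockDeviation (fun m => ∑ k ∈ range m, X k ω) n) μ := by
    have hS (m : ℕ) : MemLp (fun ω => ∑ k ∈ range m, X k ω) 2 μ :=
      memLp_finsetSum _ fun k _ => hX k
    unfold squareBlockDeviation
    exact (((hS _).integrable_sq).add
      (integrable_finsetSum _ fun m _ => ((hS m).sub (hS _)).integrable_sq)).div_const _
  have hsum : Summable fun n =>
      ∫ ω, ‖squareBlockDeviation (fun m => ∑ k ∈ range m, X k ω) n‖ ∂μ := by
    refine Summable.of_nonneg_of_le (fun n => integral_nonneg fun _ => norm_nonneg _)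
      (fun n => ?_) ((Real.summable_one_div_nat_pow.2 one_lt_two).mul_left (10 * V))
    simp_rw [Real.norm_of_nonneg (squareBlockDeviation_nonneg _ _)]
    exact (integral_squareBlockDeviation_le hX hindep hmean hV n).trans_eq (by ring)
  filter_upwards [ae_summable_norm_of_summable_integral_norm hint hsum] with ω hω
  refine tendsto_div_natCast_of_tendsto_squareBlockDeviation ?_
  simpa [Real.norm_of_nonneg (squareBlockDeviation_nonneg _ _)] using hω.tendsto_atTop_zero

end

theorem strong_law_ae_mul_of_abs_le {ε : ℕ → Ω → ℝ} {σ2 : ℝ} (hε : ∀ k, MemLp (ε k) 2 μ)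
    (hindep : Pairwise fun i j => IndepFun (ε i) (ε j) μ) (hmean : ∀ k, μ[ε k] = 0)
    (hvar : ∀ k, Var[ε k; μ] ≤ σ2) {c : ℕ → ℝ} {C : ℝ} (hc : ∀ k, |c k| ≤ C) :
    ∀ᵐ ω ∂μ, Tendsto (fun n : ℕ => (∑ k ∈ range n, c k * ε k ω) / n) atTop (nhds 0) := by
  refine strong_law_ae_of_variance_le (X := fun k ω => c k * ε k ω) (V := C ^ 2 * σ2)
    (fun k => (hε k).const_mul (c k))
    (fun i j hij => (hindep hij).comp (measurable_const_mul (c i)) (measurable_const_mul (c j)))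
    (fun k => by simp [integral_const_mul, hmean k]) fun k => ?_
  rw [variance_const_mul, ← sq_abs]
  have hC : 0 ≤ C := (abs_nonneg _).trans (hc k)
  exact mul_le_mul (pow_le_pow_left₀ (abs_nonneg _) (hc k) 2) (hvar k) (variance_nonneg _ _)
    (by positivity)

end StrongLaw

/-- Corollary 2 (consistency of the corrected Hoyer index): for a uniformly bounded
nonnegative anomaly sequence with Cesàro averages `ā` and `ā̄² > 0`, and i.i.d. mean-zero
noise of variance `σ² ∈ (0,∞)`, almost surely
`g_n(a+ε) - h_n(a) → 0` and `g_n(a+ε) → 1 - ā/√(ā̄²)`. -/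
theorem correctedHoyer_consistent
    {Ω : Type*} [MeasureSpace Ω] [IsProbabilityMeasure (ℙ : Measure Ω)]
    (a : ℕ → ℝ) (abar a2bar : ℝ)
    (ha_nonneg : ∀ k, 0 ≤ a k)
    (ha_bdd : ∃ C, ∀ k, a k ≤ C)
    (hcesaro : Tendsto (fun n : ℕ => (∑ k ∈ Finset.range n, a k) / n) atTop (nhds abar))
    (hcesaro2 :
      Tendsto (fun n : ℕ => (∑ k ∈ Finset.range n, (a k) ^ 2) / n) atTop (nhds a2bar))
    (ha2bar : 0 < a2bar)
    (ε : ℕ → Ω → ℝ) (σ2 : ℝ) (hσ2 : 0 < σ2)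
    (hmeas : ∀ k, Measurable (ε k))
    (hindep : iIndepFun ε ℙ)
    (hident : ∀ k, Measure.map (ε k) ℙ = Measure.map (ε 0) ℙ)
    (hint : ∀ k, Integrable (ε k) ℙ)
    (hmean : ∀ k, ∫ ω, ε k ω = 0)
    (hsqint : ∀ k, Integrable (fun ω => (ε k ω) ^ 2) ℙ)
    (hvar : ∀ k, ∫ ω, (ε k ω) ^ 2 = σ2) :
    ∀ᵐ ω ∂(ℙ : Measure Ω),
      Tendsto
        (fun n : ℕ =>
          correctedHoyerSeq abar a2bar σ2 n (fun k => a k + ε k ω) - hoyerSeq n a)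
        atTop (nhds 0) ∧
      Tendsto
        (fun n : ℕ => correctedHoyerSeq abar a2bar σ2 n (fun k => a k + ε k ω))
        atTop (nhds (1 - abar / Real.sqrt a2bar)) := by
  obtain ⟨C, hC⟩ := ha_bdd
  have hpair : Pairwise fun i j => IndepFun (ε i) (ε j) ℙ := fun i j hij => hindep.indepFun hij
  have hidd (k : ℕ) : IdentDistrib (ε k) (ε 0) ℙ ℙ :=
    ⟨(hmeas k).aemeasurable, (hmeas 0).aemeasurable, hident k⟩
  have hsq : Measurable fun x : ℝ => x ^ 2 := measurable_id.pow_const 2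
  have habar : 0 ≤ abar :=
    ge_of_tendsto' hcesaro fun n => div_nonneg (sum_nonneg fun k _ => ha_nonneg k) n.cast_nonneg
  filter_upwards [strong_law_ae_real ε (hint 0) hpair hidd,
    strong_law_ae_real (fun k ω => ε k ω ^ 2) (hsqint 0)
      (fun i j hij => (hpair hij).comp hsq hsq) (fun k => (hidd k).comp hsq),
    strong_law_ae_mul_of_abs_le
      (fun k => (memLp_two_iff_integrable_sq (hmeas k).aestronglyMeasurable).2 (hsqint k)) hpair
      hmean (fun k => (variance_of_integral_eq_zero (hmeas k).aemeasurable (hmean k)).trans_le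
        (hvar k).le) (fun k => (abs_of_nonneg (ha_nonneg k)).trans_le (hC k))]
    with ω hlin hquad hmix
  rw [hmean 0] at hlin
  rw [hvar 0] at hquad
  have hval : 1 - abar / √(a2bar + σ2) - hoyerBias abar a2bar σ2 = 1 - abar / √a2bar := by
    rw [hoyerBias_eq_sub ha2bar (by linarith)]; ring
  have hlim : Tendsto (fun n => correctedHoyerSeq abar a2bar σ2 n fun k => a k + ε k ω) atTop
      (nhds (1 - abar / √a2bar)) := by
    have h := (tendsto_hoyerSeq (by linarith) (tendsto_cesaro_add hcesaro hlin)
      (tendsto_cesaro_add_sq hcesaro2 hmix hquad)).sub_const (hoyerBias abar a2bar σ2)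
    rwa [add_zero, mul_zero, add_zero, abs_of_nonneg habar, hval] at h
  refine ⟨?_, hlim⟩
  simpa [abs_of_nonneg habar] using hlim.sub (tendsto_hoyerSeq ha2bar hcesaro hcesaro2)
end
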